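/- arXiv:1607.07272 — 10 statements merged into one kernel-verified Lean document; each statement's English description precedes it below -/
import Mathlib

section
/- Let N ≥ 1 be an integer and P ≥ 1 a squarefree integer. Let W_P(N) be the set of integers n with 1 ≤ n ≤ P such that (N−n)(N+n) is coprime to P. Then |W_P(N)| = ∏_{p ∣ gcd(N,P)} (p−1) · ∏_{p ∣ P, p ∤ 2N} (p−2), where the products run over prime divisors. -/
/-!
Reducing modulo `P`, `W_P(N)` is in bijection with the residues `x` for which `N² - x²` is a unit
in `ZMod P`. By the Chinese remainder theorem the number of residues at which a fixed integer
polynomial takes unit values is multiplicative in the modulus, so for squarefree `P` it is the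
product of the counts modulo the primes `p ∣ P`. Modulo `p` the residues to avoid are `N` and `-N`,
which coincide exactly when `p ∣ 2N`; the primes dividing `2N` but not `N` only contribute
the factor `2 - 1 = 1`.
-/

open Finset Polynomial

theorem ZMod.isUnit_intCast_iff_gcd_eq_one (a : ℤ) (n : ℕ) :
    IsUnit (a : ZMod n) ↔ Int.gcd a n = 1 := by
  rw [ZMod.coe_int_isUnit_iff_isCoprime, Int.isCoprime_iff_gcd_eq_one, Int.gcd_comm]

theorem card_filter_Icc_eq_card_zmod (n : ℕ) [NeZero n] (q : ZMod n → Prop) [DecidablePred q] :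
    #{k ∈ Icc 1 n | q (k : ℕ)} = Nat.card {x // q x} := by
  have hper : Function.Periodic (fun k : ℕ => q k) n := fun k => by simp
  rw [← Ico_add_one_right_eq_Icc, add_comm, Nat.filter_Ico_card_eq_of_periodic _ _ _ hper,
    Nat.count_eq_card_filter_range, Nat.card_eq_fintype_card, Fintype.card_subtype]
  refine card_nbij' Nat.cast ZMod.val ?_ ?_ ?_ ?_
  · intro k hk
    simp_all
  · intro x _
    simp_all [ZMod.val_lt]
  · intro k hk
    exact ZMod.val_cast_of_lt (mem_range.1 (mem_filter.1 hk).1)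
  · intro x _
    exact ZMod.natCast_zmod_val x

section UnitValues

variable (f : ℤ[X])

theorem card_isUnit_aeval_zmod_mul {a b : ℕ} (hab : a.Coprime b) :
    Nat.card {x : ZMod (a * b) // IsUnit (aeval x f)} =
      Nat.card {x : ZMod a // IsUnit (aeval x f)} * Nat.card {x : ZMod b // IsUnit (aeval x f)} := by
  let e := ZMod.chineseRemainder hab
  have hunit (x : ZMod (a * b)) :
      IsUnit (aeval x f) ↔ IsUnit (aeval (e x).1 f) ∧ IsUnit (aeval (e x).2 f) := by
    have he : e (aeval x f) = aeval (e x) f :=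
      (aeval_algHom_apply e.toRingHom.toIntAlgHom x f).symm
    rw [← isUnit_map_iff e, he, aeval_prod_apply, Prod.isUnit_iff]
  rw [← Nat.card_prod]
  exact Nat.card_congr ((e.toEquiv.subtypeEquiv hunit).trans Equiv.subtypeProdEquivProd)

theorem card_isUnit_aeval_zmod_prod_primes {s : Finset ℕ} (hs : ∀ p ∈ s, p.Prime) :
    Nat.card {x : ZMod (∏ p ∈ s, p) // IsUnit (aeval x f)} =
      ∏ p ∈ s, Nat.card {x : ZMod p // IsUnit (aeval x f)} := by
  induction s using Finset.induction_on with
  | empty =>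
    rw [prod_empty, prod_empty, Nat.card_eq_one_iff_unique]
    exact ⟨inferInstance, ⟨⟨0, isUnit_of_subsingleton _⟩⟩⟩
  | insert p s hp ih =>
    have hcop : p.Coprime (∏ q ∈ s, q) := Nat.Coprime.prod_right fun q hq =>
      (Nat.coprime_primes (hs p (mem_insert_self p s)) (hs q (mem_insert_of_mem hq))).2
        (ne_of_mem_of_not_mem hq hp).symm
    rw [prod_insert hp, prod_insert hp, card_isUnit_aeval_zmod_mul f hcop,
      ih fun q hq => hs q (mem_insert_of_mem hq)]

theorem card_isUnit_aeval_zmod_of_squarefree {n : ℕ} (hn : Squarefree n) :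
    Nat.card {x : ZMod n // IsUnit (aeval x f)} =
      ∏ p ∈ n.primeFactors, Nat.card {x : ZMod p // IsUnit (aeval x f)} := by
  have h := card_isUnit_aeval_zmod_prod_primes f (s := n.primeFactors)
    fun p hp => Nat.prime_of_mem_primeFactors hp
  rwa [Nat.prod_primeFactors_of_squarefree hn] at h

end UnitValues

theorem card_isUnit_sub_mul_add {K : Type*} [Field K] [Fintype K] [DecidableEq K] (a : K) :
    Nat.card {x : K // IsUnit ((a - x) * (a + x))} = Fintype.card K - #{a, -a} := by
  rw [← card_compl, Nat.card_eq_fintype_card, Fintype.card_subtype]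
  congr 1
  ext x
  simp only [mem_filter, mem_univ, true_and, mem_compl, mem_insert, mem_singleton, not_or,
    isUnit_iff_ne_zero, mul_ne_zero_iff, sub_ne_zero, ne_eq, add_eq_zero_iff_eq_neg', eq_comm]

theorem ZMod.card_pair_natCast_neg (N p : ℕ) :
    #{(N : ZMod p), -(N : ZMod p)} = if p ∣ 2 * N then 1 else 2 := by
  have hself : (N : ZMod p) = -N ↔ p ∣ 2 * N := by
    rw [← ZMod.natCast_eq_zero_iff, eq_neg_iff_add_eq_zero]
    push_cast
    ring_nf
  split_ifs with h
  · rw [← hself.2 h, pair_eq_singleton, card_singleton]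
  · exact card_pair (mt hself.1 h)

theorem ZMod.card_isUnit_natCast_sub_mul_add (N p : ℕ) [Fact p.Prime] :
    Nat.card {x : ZMod p // IsUnit ((N - x) * (N + x))} =
      if p ∣ 2 * N then p - 1 else p - 2 := by
  rw [card_isUnit_sub_mul_add, ZMod.card, ZMod.card_pair_natCast_neg]
  split_ifs <;> rfl

theorem prod_primeFactors_dvd_two_mul_sub_one (N P : ℕ) (hP : P ≠ 0) :
    ∏ p ∈ P.primeFactors with p ∣ 2 * N, (p - 1) = ∏ p ∈ (N.gcd P).primeFactors, (p - 1) := by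
  have hgcd : N.gcd P ≠ 0 := Nat.gcd_ne_zero_right hP
  refine (prod_subset (fun p hp => ?_) fun p hp hpgcd => ?_).symm
  · obtain ⟨hp, hpgcd, -⟩ := Nat.mem_primeFactors.1 hp
    exact mem_filter.2 ⟨Nat.mem_primeFactors.2 ⟨hp, hpgcd.trans (Nat.gcd_dvd_right N P), hP⟩,
      (hpgcd.trans (Nat.gcd_dvd_left N P)).mul_left 2⟩
  · obtain ⟨hpP, hp2N⟩ := mem_filter.1 hp
    obtain ⟨hp, hpP, -⟩ := Nat.mem_primeFactors.1 hpP
    have hpN : ¬p ∣ N := fun h => hpgcd (Nat.mem_primeFactors.2 ⟨hp, Nat.dvd_gcd h hpP, hgcd⟩)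
    have hp2 : p = 2 :=
      (Nat.prime_dvd_prime_iff_eq hp Nat.prime_two).1 ((hp.dvd_mul.1 hp2N).resolve_right hpN)
    simp [hp2]

theorem stmt_1_general (N P : ℕ) (hsq : Squarefree P) :
    ((Finset.Icc 1 P).filter
        (fun n : ℕ => Int.gcd (((N : ℤ) - (n : ℤ)) * ((N : ℤ) + (n : ℤ))) (P : ℤ) = 1)).card
      = (∏ p ∈ (Nat.gcd N P).primeFactors, (p - 1)) *
        ∏ p ∈ P.primeFactors.filter (fun p => ¬ p ∣ 2 * N), (p - 2) := by
  classical
  have : NeZero P := ⟨hsq.ne_zero⟩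
  let f : ℤ[X] := (C (N : ℤ) - X) * (C (N : ℤ) + X)
  have hf {R : Type} [CommRing R] (x : R) : aeval x f = (N - x) * (N + x) := by simp [f]
  calc _ = #{n ∈ Icc 1 P | IsUnit (aeval ((n : ℕ) : ZMod P) f)} := by
        refine congrArg card (filter_congr fun n _ => ?_)
        rw [← ZMod.isUnit_intCast_iff_gcd_eq_one, hf]
        push_cast
        rfl
    _ = ∏ p ∈ P.primeFactors, Nat.card {x : ZMod p // IsUnit (aeval x f)} := by
        rw [card_filter_Icc_eq_card_zmod P fun x => IsUnit (aeval x f),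
          card_isUnit_aeval_zmod_of_squarefree f hsq]
    _ = ∏ p ∈ P.primeFactors, if p ∣ 2 * N then p - 1 else p - 2 := prod_congr rfl fun p hp => by
        have := Fact.mk (Nat.prime_of_mem_primeFactors hp)
        simp_rw [hf]
        exact ZMod.card_isUnit_natCast_sub_mul_add N p
    _ = _ := by rw [prod_ite, prod_primeFactors_dvd_two_mul_sub_one N P hsq.ne_zero]

theorem stmt_1 (N P : ℕ) (hN : 1 ≤ N) (hP : 1 ≤ P) (hsq : Squarefree P) :
    ((Finset.Icc 1 P).filter
        (fun n : ℕ => Int.gcd (((N : ℤ) - (n : ℤ)) * ((N : ℤ) + (n : ℤ))) (P : ℤ) = 1)).card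
      = (∏ p ∈ (Nat.gcd N P).primeFactors, (p - 1)) *
        ∏ p ∈ P.primeFactors.filter (fun p => ¬ p ∣ 2 * N), (p - 2) :=
  stmt_1_general N P hsq
end

section
/- Let N ≥ 1 be an integer, P ≥ 1 squarefree, and define c = gcd(N·P, 6)/gcd(N, 6). If n is an integer with 1 ≤ n ≤ P and (N−n)(N+n) coprime to P, then c divides n. -/
/-!
Since 6 is squarefree, `c` divides `P` and is prime to `N`. Modulo a divisor of 6 every unit
squares to 1, so `(N - n) * (N + n)` can only be a unit there when `n ≡ 0`.
-/

theorem ZMod.eq_zero_of_isUnit_of_isUnit_sub_mul_add {c : ℕ} (hc : c ∣ 6) {a b : ZMod c}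
    (ha : IsUnit a) (hab : IsUnit ((a - b) * (a + b))) : b = 0 := by
  obtain rfl | rfl | rfl | rfl : c = 1 ∨ c = 2 ∨ c = 3 ∨ c = 6 := by
    have hc' : c ∈ Nat.divisors 6 := Nat.mem_divisors.mpr ⟨hc, by norm_num⟩
    simpa [show Nat.divisors 6 = {1, 2, 3, 6} by decide] using hc'
  all_goals revert a b; decide

theorem Int.dvd_of_isCoprime_of_isCoprime_sub_mul_add {c : ℕ} (hc : c ∣ 6) {x y : ℤ}
    (hx : IsCoprime (c : ℤ) x) (hxy : IsCoprime (c : ℤ) ((x - y) * (x + y))) : (c : ℤ) ∣ y := by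
  rw [← ZMod.intCast_zmod_eq_zero_iff_dvd]
  rw [← ZMod.coe_int_isUnit_iff_isCoprime] at hx hxy
  push_cast at hxy
  exact ZMod.eq_zero_of_isUnit_of_isUnit_sub_mul_add hc hx hxy

theorem Nat.gcd_mul_div_gcd_dvd_right {m : ℕ} (hm : 0 < m) (N P : ℕ) :
    gcd (N * P) m / gcd N m ∣ P := by
  rw [Nat.div_dvd_iff_dvd_mul (gcd_dvd_gcd_of_dvd_left m (dvd_mul_right N P))
    (gcd_pos_of_pos_right N hm), ← Nat.gcd_mul_right]
  exact Nat.gcd_dvd_gcd_mul_right_right _ _ _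

theorem Nat.coprime_gcd_mul_div_gcd_left {m : ℕ} (hm : Squarefree m) (N P : ℕ) :
    Coprime (gcd (N * P) m / gcd N m) N := by
  set q := gcd (N * P) m / gcd N m
  have hqg : q * gcd N m = gcd (N * P) m :=
    Nat.div_mul_cancel (gcd_dvd_gcd_of_dvd_left m (dvd_mul_right N P))
  have hqm : q ∣ m := (Dvd.intro _ hqg).trans (gcd_dvd_right _ _)
  have hcop : Coprime q (gcd N m) :=
    coprime_of_squarefree_mul (hm.squarefree_of_dvd (hqg ▸ gcd_dvd_right _ _))
  exact Nat.eq_one_of_dvd_one <| hcop ▸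
    dvd_gcd (gcd_dvd_left q N) (dvd_gcd (gcd_dvd_right q N) ((gcd_dvd_left q N).trans hqm))

theorem stmt_3_general (N P : ℕ)
    (c : ℕ) (hc : c = Nat.gcd (N * P) 6 / Nat.gcd N 6)
    (n : ℕ)
    (hcop : Int.gcd (((N : ℤ) - (n : ℤ)) * ((N : ℤ) + (n : ℤ))) (P : ℤ) = 1) :
    c ∣ n := by
  have hcP : c ∣ P := hc ▸ Nat.gcd_mul_div_gcd_dvd_right (by norm_num) N P
  have hcN : c.Coprime N := hc ▸ Nat.coprime_gcd_mul_div_gcd_left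
    (Nat.squarefree_mul_iff.mpr ⟨by norm_num, Nat.squarefree_two, Nat.prime_three.squarefree⟩) N P
  have hc6 : c ∣ 6 := hc ▸ (Nat.div_dvd_of_dvd
    (Nat.gcd_dvd_gcd_of_dvd_left 6 (dvd_mul_right N P))).trans (Nat.gcd_dvd_right _ _)
  have hcNn : IsCoprime (c : ℤ) ((N - n) * (N + n)) :=
    (Int.isCoprime_iff_gcd_eq_one.mpr hcop).symm.of_isCoprime_of_dvd_left
      (Int.natCast_dvd_natCast.mpr hcP)
  exact_mod_cast Int.dvd_of_isCoprime_of_isCoprime_sub_mul_add hc6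
    (Nat.isCoprime_iff_coprime.mpr hcN) hcNn

theorem stmt_3 (N P : ℕ) (hN : 1 ≤ N) (hP : 1 ≤ P) (hsq : Squarefree P)
    (c : ℕ) (hc : c = Nat.gcd (N * P) 6 / Nat.gcd N 6)
    (n : ℕ) (hn1 : 1 ≤ n) (hnP : n ≤ P)
    (hcop : Int.gcd (((N : ℤ) - (n : ℤ)) * ((N : ℤ) + (n : ℤ))) (P : ℤ) = 1) :
    c ∣ n :=
  stmt_3_general N P c hc n hcop
end

section
/- Let N ≥ 1 be an integer, P ≥ 1 squarefree, P_{6N} = P/gcd(P,6N). For a divisor d of P_{6N}, let W_P^d(N) = {n : 1 ≤ n ≤ P, gcd((N−n)(N+n), P) = 1, gcd(P_{6N}, n) = d}. Then |W_P^d(N)| = ∏_{p ∣ gcd(N,P)} (p−1) · ∏_{p ∣ P, p ∤ 6dN} (p−3), where the products run over prime divisors. -/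
/-!
Since `P` is squarefree, the Chinese remainder theorem splits the conditions on `n` into
independent conditions on `n mod p` for the primes `p ∣ P`: `n ≢ ±N`, and, when `p ∤ 6N`
(equivalently `p ∣ P_{6N}`), `p ∣ n` exactly when `p ∣ d`. Counting residues mod `p` gives
`p - 1` if `p ∣ N` (only `0` is excluded); `1` if `p ∣ 6`, `p ∤ N` (for `p = 2, 3` the residues
`±N` exhaust the non-zero ones); `1` if `p ∤ 6N`, `p ∣ d` (only `0` survives); and `p - 3`
otherwise (`0, N, -N` are distinct).
-/

open Finset

lemma card_filter_Icc_natCast {m : ℕ} [NeZero m] (f : ZMod m → Prop) [DecidablePred f] :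
    #{n ∈ Icc 1 m | f ((n : ℕ) : ZMod m)} = Fintype.card {x // f x} := by
  have hinj : Set.InjOn (Nat.cast : ℕ → ZMod m) (Icc 1 m) := by
    intro a ha b hb hab
    simp only [coe_Icc, Set.mem_Icc] at ha hb
    refine ((ZMod.natCast_eq_natCast_iff a b m).1 hab).eq_of_abs_lt ?_
    rw [abs_lt]
    omega
  have himage : (Icc 1 m).image (Nat.cast : ℕ → ZMod m) = univ :=
    eq_univ_of_card _ (by rw [card_image_of_injOn hinj, Nat.card_Icc, ZMod.card]; simp)
  rw [Fintype.card_subtype, ← himage, filter_image,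
    card_image_of_injOn (hinj.mono (filter_subset _ _))]

lemma card_filter_Icc_forall_primeFactors {P : ℕ} (hP : Squarefree P)
    (L : ∀ p : ℕ, ZMod p → Prop) [∀ p, DecidablePred (L p)] :
    #{n ∈ Icc 1 P | ∀ p ∈ P.primeFactors, L p ((n : ℕ) : ZMod p)} =
      ∏ p ∈ P.primeFactors, Nat.card {y : ZMod p // L p y} := by
  have : NeZero P := ⟨hP.ne_zero⟩
  have hprod : P = ∏ p : P.primeFactors, (p : ℕ) := by
    rw [prod_coe_sort P.primeFactors fun p => p, Nat.prod_primeFactors_of_squarefree hP]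
  have hcop : Pairwise fun p q : P.primeFactors => Nat.Coprime p q := fun p q hpq =>
    (Nat.coprime_primes (Nat.prime_of_mem_primeFactors p.2)
      (Nat.prime_of_mem_primeFactors q.2)).2 (Subtype.coe_ne_coe.2 hpq)
  let e : ZMod P ≃+* Π p : P.primeFactors, ZMod p :=
    (ZMod.ringEquivCongr hprod).trans (ZMod.prodEquivPi _ hcop)
  have he (x : ZMod P) (p : P.primeFactors) : e x p = x.cast :=
    RingHom.congr_fun (Subsingleton.elim ((Pi.evalRingHom _ p).comp e.toRingHom)
      (ZMod.castHom (Nat.dvd_of_mem_primeFactors p.2) _)) x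
  calc #{n ∈ Icc 1 P | ∀ p ∈ P.primeFactors, L p ((n : ℕ) : ZMod p)}
      = #{n ∈ Icc 1 P | ∀ p : P.primeFactors, L p (ZMod.cast ((n : ℕ) : ZMod P) : ZMod p)} := by
        congr 1
        ext n
        simp only [mem_filter, Subtype.forall]
        refine and_congr_right fun _ => forall₂_congr fun p hp => ?_
        rw [ZMod.cast_natCast (Nat.dvd_of_mem_primeFactors hp)]
    _ = Nat.card {x : ZMod P // ∀ p : P.primeFactors, L p x.cast} := by
        rw [card_filter_Icc_natCast fun x : ZMod P => ∀ p : P.primeFactors, L p x.cast,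
          Nat.card_eq_fintype_card]
    _ = Nat.card {f : Π p : P.primeFactors, ZMod p // ∀ p : P.primeFactors, L p (f p)} :=
        Nat.card_congr (e.toEquiv.subtypeEquiv fun x => by simp [he])
    _ = ∏ p ∈ P.primeFactors, Nat.card {y : ZMod p // L p y} := by
        rw [Nat.card_congr (Equiv.subtypePiEquivPi (β := fun p : P.primeFactors => ZMod p)
          (p := fun p y => L p y)), Nat.card_pi,
          prod_coe_sort P.primeFactors fun p => Nat.card {y : ZMod p // L p y}]

lemma Int.gcd_natCast_eq_one_iff_forall_primeFactors {x : ℤ} {P : ℕ} (hP : P ≠ 0) :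
    Int.gcd x P = 1 ↔ ∀ p ∈ P.primeFactors, ¬ (p : ℤ) ∣ x := by
  rw [Int.gcd_eq_natAbs_gcd_natAbs, Int.natAbs_natCast, ← Nat.coprime_iff_gcd_eq_one,
    ← not_iff_not, Nat.Prime.not_coprime_iff_dvd]
  simp only [Nat.mem_primeFactors, ne_eq, hP, not_false_eq_true, and_true, Int.natCast_dvd,
    not_forall, not_not, exists_prop]
  exact exists_congr fun p => by tauto

lemma Nat.Prime.intCast_dvd_sub_mul_add_iff {p : ℕ} (hp : p.Prime) (a b : ℤ) :
    (p : ℤ) ∣ (a - b) * (a + b) ↔ (b : ZMod p) = a ∨ (b : ZMod p) = -a := by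
  have := Fact.mk hp
  rw [← ZMod.intCast_zmod_eq_zero_iff_dvd]
  push_cast
  rw [_root_.mul_eq_zero, sub_eq_zero, add_eq_zero_iff_eq_neg', eq_comm]

lemma Nat.gcd_eq_iff_forall_prime_dvd {M n d : ℕ} (hM : Squarefree M) (hd : d ∣ M) :
    Nat.gcd M n = d ↔ ∀ p, p.Prime → p ∣ M → (p ∣ n ↔ p ∣ d) := by
  rw [Nat.Squarefree.ext_iff (hM.squarefree_of_dvd (Nat.gcd_dvd_left M n))
    (hM.squarefree_of_dvd hd)]
  refine forall₂_congr fun p _ => ?_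
  rw [Nat.dvd_gcd_iff]
  have : p ∣ d → p ∣ M := (·.trans hd)
  tauto

lemma Nat.Prime.dvd_div_gcd_iff {P m p : ℕ} (hP : Squarefree P) (hp : p.Prime) :
    p ∣ P / Nat.gcd P m ↔ p ∣ P ∧ ¬ p ∣ m := by
  have hsplit : Nat.gcd P m * (P / Nat.gcd P m) = P :=
    Nat.mul_div_cancel' (Nat.gcd_dvd_left P m)
  constructor
  · intro h
    have hpP : p ∣ P := h.trans (Nat.div_dvd_of_dvd (Nat.gcd_dvd_left P m))
    refine ⟨hpP, fun hpm => hp.one_lt.ne' (Nat.isUnit_iff.1 (hP p ?_))⟩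
    rw [← hsplit]
    exact mul_dvd_mul (Nat.dvd_gcd hpP hpm) h
  · rintro ⟨hpP, hpm⟩
    rw [← hsplit] at hpP
    exact (hp.dvd_mul.1 hpP).resolve_left fun h => hpm (h.trans (Nat.gcd_dvd_right P m))

/-- The residues mod `p` allowed for elements of `W_P^d(N)` at a prime `p ∣ P`. -/
def IsLocallyAdmissible (N d p : ℕ) (y : ZMod p) : Prop :=
  y ≠ N ∧ y ≠ -N ∧ (¬ p ∣ 6 * N → (y = 0 ↔ p ∣ d))

instance (N d p : ℕ) : DecidablePred (IsLocallyAdmissible N d p) := fun _ => by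
  unfold IsLocallyAdmissible
  infer_instance

lemma gcd_conditions_iff_forall_isLocallyAdmissible {N P d : ℕ} (hP : Squarefree P)
    (hd : d ∣ P / Nat.gcd P (6 * N)) (n : ℕ) :
    (Int.gcd (((N : ℤ) - n) * ((N : ℤ) + n)) P = 1 ∧ Nat.gcd (P / Nat.gcd P (6 * N)) n = d) ↔
      ∀ p ∈ P.primeFactors, IsLocallyAdmissible N d p n := by
  rw [Int.gcd_natCast_eq_one_iff_forall_primeFactors hP.ne_zero, Nat.gcd_eq_iff_forall_prime_dvd
    (hP.squarefree_of_dvd (Nat.div_dvd_of_dvd (Nat.gcd_dvd_left _ _))) hd]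
  have hmem {p : ℕ} : p ∈ P.primeFactors ↔ p.Prime ∧ p ∣ P := by
    simp [Nat.mem_primeFactors, hP.ne_zero]
  simp only [hmem, and_imp]
  refine ⟨fun ⟨hcop, hgcd⟩ p hp hpP => ?_, fun h => ⟨fun p hp hpP => ?_, fun p hp hpP' => ?_⟩⟩
  · have hne := hcop p hp hpP
    rw [hp.intCast_dvd_sub_mul_add_iff, Int.cast_natCast, Int.cast_natCast, not_or] at hne
    refine ⟨hne.1, hne.2, fun h6 => ?_⟩
    rw [ZMod.natCast_eq_zero_iff]
    exact hgcd p hp ((hp.dvd_div_gcd_iff hP).2 ⟨hpP, h6⟩)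
  · rw [hp.intCast_dvd_sub_mul_add_iff, Int.cast_natCast, Int.cast_natCast, not_or]
    exact ⟨(h p hp hpP).1, (h p hp hpP).2.1⟩
  · obtain ⟨hpP, h6⟩ := (hp.dvd_div_gcd_iff hP).1 hpP'
    rw [← ZMod.natCast_eq_zero_iff]
    exact (h p hp hpP).2.2 h6

section LocalCount

variable {N d p : ℕ} [Fact p.Prime]

lemma card_isLocallyAdmissible_of_dvd (hpN : p ∣ N) :
    Fintype.card {y : ZMod p // IsLocallyAdmissible N d p y} = p - 1 := by
  have hN : (N : ZMod p) = 0 := (ZMod.natCast_eq_zero_iff _ _).2 hpN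
  have h6N : p ∣ 6 * N := dvd_mul_of_dvd_right hpN 6
  have : ({y | IsLocallyAdmissible N d p y} : Finset (ZMod p)) = univ.erase 0 := by
    ext y
    simp [IsLocallyAdmissible, hN, h6N]
  rw [Fintype.card_subtype, this, card_erase_of_mem (mem_univ _), card_univ, ZMod.card]

lemma card_isLocallyAdmissible_of_dvd_six (hpN : ¬ p ∣ N) (hp6 : p ∣ 6) :
    Fintype.card {y : ZMod p // IsLocallyAdmissible N d p y} = 1 := by
  have hN : (N : ZMod p) ≠ 0 := mt (ZMod.natCast_eq_zero_iff _ _).1 hpN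
  have h6N : p ∣ 6 * N := dvd_mul_of_dvd_left hp6 N
  have hp : p.Prime := Fact.out
  have hp23 : p = 2 ∨ p = 3 := by
    rcases hp.dvd_mul.1 (show p ∣ 2 * 3 from hp6) with h | h
    · exact Or.inl ((Nat.prime_dvd_prime_iff_eq hp Nat.prime_two).1 h)
    · exact Or.inr ((Nat.prime_dvd_prime_iff_eq hp Nat.prime_three).1 h)
  simp only [IsLocallyAdmissible, h6N, not_true_eq_false, false_imp_iff, and_true]
  generalize (N : ZMod p) = z at hN
  rcases hp23 with rfl | rfl <;> decide +revert

lemma card_isLocallyAdmissible_of_not_dvd (h6N : ¬ p ∣ 6 * N) :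
    Fintype.card {y : ZMod p // IsLocallyAdmissible N d p y} = if p ∣ d then 1 else p - 3 := by
  have hN : (N : ZMod p) ≠ 0 :=
    mt (ZMod.natCast_eq_zero_iff _ _).1 fun h => h6N (dvd_mul_of_dvd_right h 6)
  have hNneg : (N : ZMod p) ≠ -N := by
    intro h
    refine h6N ((ZMod.natCast_eq_zero_iff _ _).1 ?_)
    push_cast
    linear_combination 3 * h
  rw [Fintype.card_subtype]
  by_cases hpd : p ∣ d
  · have : ({y | IsLocallyAdmissible N d p y} : Finset (ZMod p)) = {0} := by
      ext y
      simp only [IsLocallyAdmissible, h6N, hpd, mem_filter, mem_univ, true_and, mem_singleton,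
        not_false_eq_true, iff_true, forall_const]
      constructor
      · exact fun h => h.2.2
      · rintro rfl
        exact ⟨hN.symm, (neg_ne_zero.2 hN).symm, rfl⟩
    rw [if_pos hpd, this, card_singleton]
  · have : ({y | IsLocallyAdmissible N d p y} : Finset (ZMod p)) =
        univ \ {(N : ZMod p), -(N : ZMod p), 0} := by
      ext y
      simp [IsLocallyAdmissible, h6N, hpd]
    rw [if_neg hpd, this, card_univ_sdiff, ZMod.card, card_insert_of_notMem, card_pair]
    · exact neg_ne_zero.2 hN
    · simp [hNneg, hN]

end LocalCount

lemma card_isLocallyAdmissible {N d p : ℕ} (hp : p.Prime) :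
    Nat.card {y : ZMod p // IsLocallyAdmissible N d p y} =
      if p ∣ N then p - 1 else if p ∣ 6 * d * N then 1 else p - 3 := by
  have := Fact.mk hp
  rw [Nat.card_eq_fintype_card]
  by_cases hpN : p ∣ N
  · rw [if_pos hpN, card_isLocallyAdmissible_of_dvd hpN]
  rw [if_neg hpN]
  by_cases hp6 : p ∣ 6
  · rw [if_pos (dvd_mul_of_dvd_left (dvd_mul_of_dvd_left hp6 d) N),
      card_isLocallyAdmissible_of_dvd_six hpN hp6]
  have h6N : ¬ p ∣ 6 * N := fun h => (hp.dvd_mul.1 h).elim hp6 hpN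
  have hdN : p ∣ 6 * d * N ↔ p ∣ d := by
    rw [mul_right_comm, hp.dvd_mul, or_iff_right h6N]
  simp only [hdN, card_isLocallyAdmissible_of_not_dvd h6N]

lemma prod_eq_prod_primeFactors_ite {N d P : ℕ} (hP : P ≠ 0) :
    (∏ p ∈ (Nat.gcd N P).primeFactors, (p - 1)) *
        ∏ p ∈ P.primeFactors.filter (fun p => ¬ p ∣ 6 * d * N), (p - 3) =
      ∏ p ∈ P.primeFactors, if p ∣ N then p - 1 else if p ∣ 6 * d * N then 1 else p - 3 := by
  have hgcd : (Nat.gcd N P).primeFactors = P.primeFactors.filter (· ∣ N) := by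
    ext p
    simp only [Nat.mem_primeFactors, mem_filter, Nat.dvd_gcd_iff, ne_eq, Nat.gcd_eq_zero_iff, hP]
    tauto
  rw [hgcd, prod_filter, prod_filter, ← prod_mul_distrib]
  refine prod_congr rfl fun p _ => ?_
  by_cases hpN : p ∣ N
  · simp [hpN, dvd_mul_of_dvd_right hpN]
  · by_cases h : p ∣ 6 * d * N <;> simp [hpN, h]

theorem stmt_6_general (N P : ℕ) (hsq : Squarefree P)
    (d : ℕ) (hd : d ∣ P / Nat.gcd P (6 * N)) :
    ((Finset.Icc 1 P).filter
        (fun n : ℕ => Int.gcd (((N : ℤ) - (n : ℤ)) * ((N : ℤ) + (n : ℤ))) (P : ℤ) = 1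
          ∧ Nat.gcd (P / Nat.gcd P (6 * N)) n = d)).card
      = (∏ p ∈ (Nat.gcd N P).primeFactors, (p - 1)) *
        ∏ p ∈ P.primeFactors.filter (fun p => ¬ p ∣ 6 * d * N), (p - 3) := by
  calc _ = #{n ∈ Icc 1 P | ∀ p ∈ P.primeFactors, IsLocallyAdmissible N d p n} := by
        congr 1
        ext n
        simp only [mem_filter, gcd_conditions_iff_forall_isLocallyAdmissible hsq hd]
    _ = ∏ p ∈ P.primeFactors, Nat.card {y : ZMod p // IsLocallyAdmissible N d p y} :=
        card_filter_Icc_forall_primeFactors hsq _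
    _ = ∏ p ∈ P.primeFactors,
          if p ∣ N then p - 1 else if p ∣ 6 * d * N then 1 else p - 3 :=
        prod_congr rfl fun p hp => card_isLocallyAdmissible (Nat.prime_of_mem_primeFactors hp)
    _ = _ := (prod_eq_prod_primeFactors_ite hsq.ne_zero).symm

theorem stmt_6 (N P : ℕ) (hN : 1 ≤ N) (hP : 1 ≤ P) (hsq : Squarefree P)
    (d : ℕ) (hd : d ∣ P / Nat.gcd P (6 * N)) :
    ((Finset.Icc 1 P).filter
        (fun n : ℕ => Int.gcd (((N : ℤ) - (n : ℤ)) * ((N : ℤ) + (n : ℤ))) (P : ℤ) = 1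
          ∧ Nat.gcd (P / Nat.gcd P (6 * N)) n = d)).card
      = (∏ p ∈ (Nat.gcd N P).primeFactors, (p - 1)) *
        ∏ p ∈ P.primeFactors.filter (fun p => ¬ p ∣ 6 * d * N), (p - 3) :=
  stmt_6_general N P hsq d hd
end

section
/- Let N ≥ 1 and P ≥ 1 squarefree. Let Q be the set of pairs (a,b) of positive integers with lcm(a,b) ∣ P and gcd(a,b) ∣ 2N, and for (a,b) ∈ Q let m_{ab} be the least n ≥ 0 with a ∣ N−n and b ∣ N+n. If (a,b), (a',b) ∈ Q with a ∣ a', then m_{a'b} ≡ m_{ab} (mod lcm(a,b)) and m_{a'b} ≥ m_{ab}. -/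
theorem stmt_8 (N P a a' b : ℤ) (hN : 1 ≤ N) (hP : 1 ≤ P) (hsq : Squarefree P)
    (ha : 0 < a) (ha' : 0 < a') (hb : 0 < b)
    (hQ1 : lcm a b ∣ P) (hQ2 : gcd a b ∣ 2 * N)
    (hQ1' : lcm a' b ∣ P) (hQ2' : gcd a' b ∣ 2 * N)
    (haa' : a ∣ a')
    (m m' : ℤ)
    (hm : IsLeast {n : ℤ | 0 ≤ n ∧ a ∣ N - n ∧ b ∣ N + n} m)
    (hm' : IsLeast {n : ℤ | 0 ≤ n ∧ a' ∣ N - n ∧ b ∣ N + n} m') :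
    lcm a b ∣ m' - m ∧ m ≤ m' := by
  obtain ⟨⟨h0, ha1, hb1⟩, hleast⟩ := hm
  obtain ⟨⟨h0', ha1', hb1'⟩, _⟩ := hm'
  have ham' : a ∣ N - m' := haa'.trans ha1'
  constructor
  · apply lcm_dvd
    · have h := dvd_sub ha1 ham'
      have e : N - m - (N - m') = m' - m := by ring
      rwa [e] at h
    · simpa using dvd_sub hb1' hb1
  · exact hleast ⟨h0', ham', hb1'⟩
end

section
/- Let N ≥ 1 and P ≥ 1 squarefree, Q the set of pairs (a,b) of positive integers with lcm(a,b) ∣ P and gcd(a,b) ∣ 2N, and m_{ab} the least n ≥ 0 with a ∣ N−n and b ∣ N+n. Then for (a,b) ∈ Q: m_{ab} + m_{ba} = 0 if lcm(a,b) ∣ N, and m_{ab} + m_{ba} = lcm(a,b) if lcm(a,b) ∤ N. -/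
theorem stmt_9 (N P a b : ℤ) (hN : 1 ≤ N) (hP : 1 ≤ P) (hsq : Squarefree P)
    (ha : 0 < a) (hb : 0 < b)
    (hQ1 : lcm a b ∣ P) (hQ2 : gcd a b ∣ 2 * N)
    (m m' : ℤ)
    (hm : IsLeast {n : ℤ | 0 ≤ n ∧ a ∣ N - n ∧ b ∣ N + n} m)
    (hm' : IsLeast {n : ℤ | 0 ≤ n ∧ b ∣ N - n ∧ a ∣ N + n} m') :
    (lcm a b ∣ N → m + m' = 0) ∧ (¬ lcm a b ∣ N → m + m' = lcm a b) := by
  obtain ⟨⟨hm0, ha1, hb1⟩, hmin⟩ := hm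
  obtain ⟨⟨hm'0, hb2, ha2⟩, hmin'⟩ := hm'
  have hal : a ∣ lcm a b := dvd_lcm_left a b
  have hbl : b ∣ lcm a b := dvd_lcm_right a b
  have hlne : lcm a b ≠ 0 := by
    simp only [Ne, lcm_eq_zero_iff]
    push_neg
    exact ⟨ha.ne', hb.ne'⟩
  have hlnn : 0 ≤ lcm a b := by
    rw [← Int.coe_lcm]; exact Int.natCast_nonneg _
  have hlpos : 0 < lcm a b := lt_of_le_of_ne hlnn (Ne.symm hlne)
  have hadvd : a ∣ m + m' := by
    have := dvd_sub ha2 ha1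
    simpa [show N + m' - (N - m) = m + m' by ring] using this
  have hbdvd : b ∣ m + m' := by
    have := dvd_sub hb1 hb2
    simpa [show N + m - (N - m') = m + m' by ring] using this
  have hl : lcm a b ∣ m + m' := lcm_dvd hadvd hbdvd
  have hmlt : m < lcm a b := by
    by_contra h
    push_neg at h
    have : m ≤ m - lcm a b := hmin ⟨by omega, by
      obtain ⟨c, hc⟩ := hal
      exact ⟨(N - m) / a + c, by
        have := Int.ediv_mul_cancel ha1
        nlinarith [Int.ediv_mul_cancel ha1]⟩, by
      obtain ⟨c, hc⟩ := hbl
      exact ⟨(N + m) / b - c, by nlinarith [Int.ediv_mul_cancel hb1]⟩⟩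
    omega
  have hm'lt : m' < lcm a b := by
    by_contra h
    push_neg at h
    have : m' ≤ m' - lcm a b := hmin' ⟨by omega, by
      obtain ⟨c, hc⟩ := hbl
      exact ⟨(N - m') / b + c, by nlinarith [Int.ediv_mul_cancel hb2]⟩, by
      obtain ⟨c, hc⟩ := hal
      exact ⟨(N + m') / a - c, by nlinarith [Int.ediv_mul_cancel ha2]⟩⟩
    omega
  constructor
  · intro hdvd
    have haN : a ∣ N := hal.trans hdvd
    have hbN : b ∣ N := hbl.trans hdvd
    have h0 : m ≤ 0 := hmin ⟨le_refl 0, by simpa using haN, by simpa using hbN⟩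
    have h0' : m' ≤ 0 := hmin' ⟨le_refl 0, by simpa using hbN, by simpa using haN⟩
    omega
  · intro hnd
    have hne : m + m' ≠ 0 := by
      intro h
      have hm0' : m = 0 := by omega
      have hm'0' : m' = 0 := by omega
      rw [hm0'] at ha1 hb1
      simp at ha1 hb1
      exact hnd (lcm_dvd ha1 hb1)
    have hpos : 0 < m + m' := by omega
    have hle := Int.le_of_dvd hpos hl
    have h2 : lcm a b ∣ (m + m' - lcm a b) := dvd_sub hl dvd_rfl
    have : m + m' - lcm a b = 0 := by
      rcases h2 with ⟨k, hk⟩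
      have hk0 : 0 ≤ k := by nlinarith
      have hk1 : k < 1 := by nlinarith
      have : k = 0 := by omega
      simp [this] at hk
      omega
    omega
end

section
/- Let N ≥ 1 and P ≥ 1 squarefree, Q the set of pairs (a,b) with lcm(a,b) ∣ P, gcd(a,b) ∣ 2N, and m_{ab} the least n ≥ 0 with a ∣ N−n, b ∣ N+n. Suppose (a,b) ∈ Q and p is a prime dividing gcd(2N, b). Define a' = a/p if p ∣ a and a' = a·p if p ∤ a (assuming in the latter case lcm(a·p, b) ∣ P). Then (a', b) ∈ Q and m_{a'b} = m_{ab}. -/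
theorem stmt_10 (N P a a' b p : ℤ) (hN : 1 ≤ N) (hP : 1 ≤ P) (hsq : Squarefree P)
    (ha : 0 < a) (hb : 0 < b) (hp : Prime p)
    (hQ1 : lcm a b ∣ P) (hQ2 : gcd a b ∣ 2 * N)
    (hpb : p ∣ gcd (2 * N) b)
    (ha'1 : p ∣ a → a' = a / p) (ha'2 : ¬ p ∣ a → a' = a * p)
    (hQ1' : lcm a' b ∣ P)
    (m m' : ℤ)
    (hm : IsLeast {n : ℤ | 0 ≤ n ∧ a ∣ N - n ∧ b ∣ N + n} m)
    (hm' : IsLeast {n : ℤ | 0 ≤ n ∧ a' ∣ N - n ∧ b ∣ N + n} m') :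
    gcd a' b ∣ 2 * N ∧ m' = m := by
  have hp2N : p ∣ 2 * N := hpb.trans (gcd_dvd_left _ _)
  have hpbb : p ∣ b := hpb.trans (gcd_dvd_right _ _)
  have haP : a ∣ P := (dvd_lcm_left a b).trans hQ1
  -- p divides N - m' (and N - m) since p ∣ b ∣ N + n and p ∣ 2N
  have key : ∀ n : ℤ, b ∣ N + n → p ∣ N - n := by
    intro n hbn
    have : p ∣ N + n := hpbb.trans hbn
    have h := dvd_sub hp2N this
    have : 2 * N - (N + n) = N - n := by ring
    rwa [this] at h
  by_cases hpa : p ∣ a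
  · have ha' : a' * p = a := by
      rw [ha'1 hpa]; exact Int.ediv_mul_cancel hpa
    have ha'a : a' ∣ a := ⟨p, ha'.symm⟩
    have hpa' : ¬ p ∣ a' := by
      intro h
      exact hp.not_unit (hsq p (((mul_dvd_mul h dvd_rfl).trans ha'.dvd).trans haP))
    have hcop : IsCoprime p a' := hp.coprime_iff_not_dvd.mpr hpa'
    constructor
    · exact (gcd_dvd_gcd ha'a dvd_rfl).trans hQ2
    · refine le_antisymm ?_ ?_
      · exact hm'.2 ⟨hm.1.1, ha'a.trans hm.1.2.1, hm.1.2.2⟩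
      · refine hm.2 ⟨hm'.1.1, ?_, hm'.1.2.2⟩
        have hpd : p ∣ N - m' := key m' hm'.1.2.2
        have := hcop.symm.mul_dvd hm'.1.2.1 hpd
        rwa [ha'] at this
  · have ha' : a' = a * p := ha'2 hpa
    have haa' : a ∣ a' := ⟨p, ha'⟩
    have hcop : IsCoprime p a := hp.coprime_iff_not_dvd.mpr hpa
    constructor
    · have h1 : gcd a' b ∣ gcd a b * gcd p b := by
        rw [ha', gcd_comm _ b, gcd_comm a b, gcd_comm p b]
        exact gcd_mul_dvd_mul_gcd b a p
      have hpg : ¬ p ∣ gcd a b := fun h => hpa (h.trans (gcd_dvd_left a b))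
      have hcop2 : IsCoprime (gcd a b) p := (hp.coprime_iff_not_dvd.mpr hpg).symm
      have h2 : gcd a b * p ∣ 2 * N := hcop2.mul_dvd hQ2 hp2N
      exact h1.trans ((mul_dvd_mul_left _ (gcd_dvd_left p b)).trans h2)
    · refine le_antisymm ?_ ?_
      · refine hm'.2 ⟨hm.1.1, ?_, hm.1.2.2⟩
        have hpd : p ∣ N - m := key m hm.1.2.2
        have := hcop.symm.mul_dvd hm.1.2.1 hpd
        rwa [← ha'] at this
      · exact hm.2 ⟨hm'.1.1, haa'.trans hm'.1.2.1, hm'.1.2.2⟩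
end

section
/- Let N ≥ 1, P ≥ 1 squarefree, and for n ≥ 1 let U_n be the set of pairs (a,b) of positive integers with lcm(a,b) ∣ P, gcd(a,b) ∣ 2N, and lcm(a,b) ∣ n − m_{ab}, where m_{ab} is the least m ≥ 0 with a ∣ N−m, b ∣ N+m. Define u_n = ∑_{(a,b) ∈ U_n} μ(a)μ(b). Then u_n = 1 if (N−n)(N+n) is coprime to P, and u_n = 0 otherwise. -/
/-!
Given the defining congruences `a ∣ N - m` and `b ∣ N + m`, the condition `lcm(a, b) ∣ n - m`
says exactly that `a ∣ N - n` and `b ∣ N + n`, and these already force `gcd(a, b) ∣ 2N`.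
Hence `U_n` is the product of the divisors of `P` dividing `N - n` with those dividing `N + n`,
i.e. of the divisors of `gcd(N - n, P)` and of `gcd(N + n, P)`, and `u_n` factors as a product
of two Möbius sums over divisors, each equal to `1` or `0` according as the gcd is `1` or not.
-/

open ArithmeticFunction ArithmeticFunction.Moebius ArithmeticFunction.zeta

theorem ArithmeticFunction.sum_divisors_moebius (g : ℕ) :
    ∑ d ∈ g.divisors, μ d = if g = 1 then 1 else 0 := by
  have h : (μ * (ζ : ArithmeticFunction ℤ)) g = (1 : ArithmeticFunction ℤ) g := by
    rw [moebius_mul_coe_zeta]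
  rwa [coe_mul_zeta_apply, one_apply] at h

theorem Nat.filter_divisors_natCast_dvd {P : ℕ} (hP : P ≠ 0) (M : ℤ) :
    P.divisors.filter (fun a : ℕ => (a : ℤ) ∣ M) = (Int.gcd M P).divisors := by
  ext a
  simp only [Finset.mem_filter, Nat.mem_divisors, Int.gcd_def, Int.natAbs_natCast,
    Nat.dvd_gcd_iff, Int.natCast_dvd]
  exact ⟨fun ⟨⟨haP, _⟩, haM⟩ => ⟨⟨haM, haP⟩, Nat.gcd_ne_zero_right hP⟩,
    fun ⟨⟨haM, haP⟩, _⟩ => ⟨⟨haP, hP⟩, haM⟩⟩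

theorem Int.gcd_mul_left_eq_one_iff (x y z : ℤ) :
    Int.gcd (x * y) z = 1 ↔ Int.gcd x z = 1 ∧ Int.gcd y z = 1 := by
  simp only [← Int.isCoprime_iff_gcd_eq_one, IsCoprime.mul_left_iff]

section Congruences

variable {α : Type*} [CommRing α] [GCDMonoid α] {a b N k n : α}

theorem lcm_dvd_sub_iff_of_dvd_sub_of_dvd_add (ha : a ∣ N - k) (hb : b ∣ N + k) :
    lcm a b ∣ n - k ↔ a ∣ N - n ∧ b ∣ N + n := by
  have hsub : N - n = (N - k) - (n - k) := by ring
  have hadd : N + n = (N + k) + (n - k) := by ring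
  rw [lcm_dvd_iff, hsub, hadd, dvd_sub_right ha, dvd_add_right hb]

theorem gcd_dvd_two_mul_of_dvd_sub_of_dvd_add (ha : a ∣ N - n) (hb : b ∣ N + n) :
    gcd a b ∣ 2 * N := by
  have h := dvd_add ((gcd_dvd_left a b).trans ha) ((gcd_dvd_right a b).trans hb)
  rwa [show N - n + (N + n) = 2 * N by ring] at h

end Congruences

theorem gcd_dvd_two_mul_and_lcm_dvd_sub_iff {a b N k : ℕ} {n : ℤ}
    (hk : Nat.gcd a b ∣ 2 * N → (a : ℤ) ∣ N - k ∧ (b : ℤ) ∣ N + k) :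
    (Nat.gcd a b ∣ 2 * N ∧ (Nat.lcm a b : ℤ) ∣ n - k) ↔ (a : ℤ) ∣ N - n ∧ (b : ℤ) ∣ N + n := by
  rw [← Int.lcm_natCast_natCast, Int.coe_lcm]
  refine ⟨fun ⟨hg, hl⟩ => ?_, fun ⟨ha, hb⟩ => ?_⟩
  · obtain ⟨hka, hkb⟩ := hk hg
    exact (lcm_dvd_sub_iff_of_dvd_sub_of_dvd_add hka hkb).mp hl
  · have hg : Nat.gcd a b ∣ 2 * N := by
      have h := gcd_dvd_two_mul_of_dvd_sub_of_dvd_add ha hb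
      rw [← Int.coe_gcd, Int.gcd_natCast_natCast] at h
      exact_mod_cast h
    obtain ⟨hka, hkb⟩ := hk hg
    exact ⟨hg, (lcm_dvd_sub_iff_of_dvd_sub_of_dvd_add hka hkb).mpr ⟨ha, hb⟩⟩

theorem stmt_11_general (N P : ℕ) (hP : 1 ≤ P)
    (m : ℕ → ℕ → ℕ)
    (hm : ∀ a b : ℕ, Nat.lcm a b ∣ P → Nat.gcd a b ∣ 2 * N →
      IsLeast {k : ℕ | (a : ℤ) ∣ (N : ℤ) - (k : ℤ) ∧ (b : ℤ) ∣ (N : ℤ) + (k : ℤ)} (m a b))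
    (n : ℕ) :
    (∑ x ∈ (P.divisors ×ˢ P.divisors).filter
        (fun x : ℕ × ℕ => Nat.gcd x.1 x.2 ∣ 2 * N ∧
          (Nat.lcm x.1 x.2 : ℤ) ∣ (n : ℤ) - (m x.1 x.2 : ℤ)),
        μ x.1 * μ x.2)
      = if Int.gcd (((N : ℤ) - (n : ℤ)) * ((N : ℤ) + (n : ℤ))) (P : ℤ) = 1 then 1 else 0 := by
  have hP0 : P ≠ 0 := by omega
  have hU : (P.divisors ×ˢ P.divisors).filter
        (fun x : ℕ × ℕ => Nat.gcd x.1 x.2 ∣ 2 * N ∧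
          (Nat.lcm x.1 x.2 : ℤ) ∣ (n : ℤ) - (m x.1 x.2 : ℤ))
      = (P.divisors.filter (fun a : ℕ => (a : ℤ) ∣ (N : ℤ) - n)) ×ˢ
        (P.divisors.filter (fun b : ℕ => (b : ℤ) ∣ (N : ℤ) + n)) := by
    ext ⟨a, b⟩
    simp only [Finset.mem_filter, Finset.mem_product]
    refine (and_congr_right fun ⟨ha, hb⟩ => ?_).trans and_and_and_comm.symm
    have hab : Nat.lcm a b ∣ P :=
      Nat.lcm_dvd (Nat.dvd_of_mem_divisors ha) (Nat.dvd_of_mem_divisors hb)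
    exact gcd_dvd_two_mul_and_lcm_dvd_sub_iff fun hg => (hm a b hab hg).1
  rw [hU, Finset.sum_product, ← Finset.sum_mul_sum, Nat.filter_divisors_natCast_dvd hP0,
    Nat.filter_divisors_natCast_dvd hP0, sum_divisors_moebius, sum_divisors_moebius,
    ite_zero_mul_ite_zero, mul_one]
  simp only [Int.gcd_mul_left_eq_one_iff]

open ArithmeticFunction ArithmeticFunction.Moebius in
theorem stmt_11 (N P : ℕ) (hN : 1 ≤ N) (hP : 1 ≤ P) (hsq : Squarefree P)
    (m : ℕ → ℕ → ℕ)
    (hm : ∀ a b : ℕ, Nat.lcm a b ∣ P → Nat.gcd a b ∣ 2 * N →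
      IsLeast {k : ℕ | (a : ℤ) ∣ (N : ℤ) - (k : ℤ) ∧ (b : ℤ) ∣ (N : ℤ) + (k : ℤ)} (m a b))
    (n : ℕ) (hn : 1 ≤ n) :
    (∑ x ∈ (P.divisors ×ˢ P.divisors).filter
        (fun x : ℕ × ℕ => Nat.gcd x.1 x.2 ∣ 2 * N ∧
          (Nat.lcm x.1 x.2 : ℤ) ∣ (n : ℤ) - (m x.1 x.2 : ℤ)),
        μ x.1 * μ x.2)
      = if Int.gcd (((N : ℤ) - (n : ℤ)) * ((N : ℤ) + (n : ℤ))) (P : ℤ) = 1 then 1 else 0 :=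
  stmt_11_general N P hP m hm n
end

section
/- Let N ≥ 1, P ≥ 1 squarefree, and W_P(N) = {n : 1 ≤ n ≤ P, gcd((N−n)(N+n), P) = 1}. For each prime p ∣ P with p ∤ 2N, let \overline{P_p} denote an inverse of P/p modulo p. Define α_p(P, kN) = p − 2 if p ∣ k, and α_p(P,kN) = −2·cos(2kN·\overline{P_p}·π/p) if p ∤ k. Then for every integer k ≥ 1: ∑_{n ∈ W_P(N)} cos(2nkπ/P) = μ(gcd(N,P)) · ∏_{p ∣ gcd(k, gcd(N,P))} (1−p) · ∏_{p ∣ P, p ∤ 2N} α_p(P, kN). -/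
/-!
Write `S_q(c) = ∑_{n ∈ W_q(N)} e(cn/q)`. If `q = ab` with `ub + va = 1`, the Chinese remainder
theorem identifies `W_{ab}(N)` with `W_a(N) × W_b(N)`, and `e(x/ab) = e(ux/a) e(vx/b)`, so
`S_{ab}(c) = S_a(uc) S_b(vc)`. For squarefree `P` this gives
`S_P(k) = ∏_{p ∣ P} S_p(k \overline{P_p})`. Modulo a prime `p`, `W_p(N)` consists of all residues
except `±N`, so `S_p(c)` is the complete character sum (`p` or `0`) minus `e(cN/p) + e(-cN/p)`.
This is `p - 1` or `-1` when `p ∣ N`, `1` when `p = 2 ∤ N`, and `p - 2` or `-2 cos(2πcN/p)`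
otherwise; the factors with `p ∣ N` multiply to `μ(gcd(N, P)) ∏ (1 - p)`.
-/

open Finset
open scoped Real

/-- `∑_{n ∈ W_q(N)} e(cn/q)`. -/
noncomputable def expSumW (N q : ℕ) (c : ℤ) : ℂ :=
  ∑ n ∈ (Icc 1 q).filter (fun n : ℕ => Int.gcd (((N : ℤ) - n) * (N + n)) q = 1),
    Complex.exp (2 * π * Complex.I * (c * n) / q)

lemma sum_Icc_one_natCast_eq_sum {M : Type*} [AddCommMonoid M] (q : ℕ) [NeZero q]
    (f : ZMod q → M) : ∑ n ∈ Icc 1 q, f n = ∑ x, f x := by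
  refine sum_nbij' (fun n => (n : ZMod q)) (fun x => if x = 0 then q else x.val)
    (by simp) (fun x _ => ?_) (fun n hn => ?_) (fun x _ => ?_) (by simp)
  · split_ifs with hx
    · simpa using NeZero.one_le
    · exact mem_Icc.2 ⟨Nat.one_le_iff_ne_zero.2 ((ZMod.val_ne_zero x).2 hx), (ZMod.val_lt x).le⟩
  · obtain ⟨hn1, hnq⟩ := mem_Icc.1 hn
    rcases hnq.lt_or_eq with hlt | rfl
    · have hn0 : (n : ZMod q) ≠ 0 := by
        rw [ne_eq, ZMod.natCast_eq_zero_iff]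
        exact Nat.not_dvd_of_pos_of_lt hn1 hlt
      simp [hn0, ZMod.val_cast_of_lt hlt]
    · simp
  · split_ifs with hx
    · simp [hx]
    · simp

lemma expSumW_eq_sum_zmod (N q : ℕ) [NeZero q] (c : ℤ) :
    expSumW N q c = ∑ x : ZMod q with IsUnit (((N : ZMod q) - x) * (N + x)),
      ZMod.stdAddChar ((c : ZMod q) * x) := by
  rw [expSumW, sum_filter, sum_filter, ← sum_Icc_one_natCast_eq_sum]
  refine sum_congr rfl fun n _ => ?_
  have hunit : Int.gcd (((N : ℤ) - n) * (N + n)) q = 1 ↔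
      IsUnit (((N : ZMod q) - n) * (N + n)) := by
    rw [← Int.isCoprime_iff_gcd_eq_one, isCoprime_comm, ← ZMod.coe_int_isUnit_iff_isCoprime]
    push_cast
    rfl
  rw [if_congr hunit rfl rfl, ← Int.cast_natCast n, ← Int.cast_mul, ZMod.stdAddChar_coe]
  push_cast
  rfl

lemma expSumW_congr {N q : ℕ} [NeZero q] {c c' : ℤ} (h : (c : ZMod q) = c') :
    expSumW N q c = expSumW N q c' := by
  rw [expSumW_eq_sum_zmod, expSumW_eq_sum_zmod, h]

lemma re_expSumW (N q : ℕ) (c : ℤ) :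
    (expSumW N q c).re =
      ∑ n ∈ (Icc 1 q).filter (fun n : ℕ => Int.gcd (((N : ℤ) - n) * (N + n)) q = 1),
        Real.cos (2 * n * c * π / q) := by
  rw [expSumW, Complex.re_sum]
  refine sum_congr rfl fun n _ => ?_
  rw [← Complex.exp_ofReal_mul_I_re]
  congr 2
  push_cast
  ring

lemma stdAddChar_intCast_of_bezout {a b : ℕ} [NeZero a] [NeZero b] {u v : ℤ}
    (huv : u * b + v * a = 1) (j : ℤ) :
    ZMod.stdAddChar (j : ZMod (a * b)) =
      ZMod.stdAddChar ((u * j : ℤ) : ZMod a) * ZMod.stdAddChar ((v * j : ℤ) : ZMod b) := by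
  have ha : (a : ℂ) ≠ 0 := NeZero.ne _
  have hb : (b : ℂ) ≠ 0 := NeZero.ne _
  have huv' : (u : ℂ) * b + v * a = 1 := by exact_mod_cast huv
  rw [ZMod.stdAddChar_coe, ZMod.stdAddChar_coe, ZMod.stdAddChar_coe, ← Complex.exp_add]
  congr 1
  push_cast
  field_simp
  linear_combination -(j : ℂ) * huv'

lemma expSumW_mul (N : ℕ) {a b : ℕ} [NeZero a] [NeZero b] (hab : a.Coprime b) {u v : ℤ}
    (huv : u * b + v * a = 1) (c : ℤ) :
    expSumW N (a * b) c = expSumW N a (u * c) * expSumW N b (v * c) := by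
  set e := ZMod.chineseRemainder hab
  simp only [expSumW_eq_sum_zmod, sum_mul_sum, ← sum_product']
  refine sum_equiv e.toEquiv (fun x => ?_) (fun x _ => ?_)
  · simp only [mem_filter, mem_univ, true_and, mem_product, ← isUnit_map_iff e, map_mul,
      map_sub, map_add, map_natCast, Prod.isUnit_iff, Prod.fst_mul, Prod.fst_sub, Prod.fst_add,
      Prod.fst_natCast, Prod.snd_mul, Prod.snd_sub, Prod.snd_add, Prod.snd_natCast]
    rfl
  · obtain ⟨j, rfl⟩ := ZMod.intCast_surjective x
    have : e j = ((j : ZMod a), (j : ZMod b)) := map_intCast e j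
    simp only [RingEquiv.toEquiv_eq_coe, EquivLike.coe_coe, this, ← Int.cast_mul]
    rw [stdAddChar_intCast_of_bezout huv]
    ring_nf

lemma expSumW_one (N : ℕ) (c : ℤ) : expSumW N 1 c = 1 := by
  simpa [expSumW, mul_comm] using Complex.exp_int_mul_two_pi_mul_I c

lemma expSumW_prod_primes (N : ℕ) (s : Finset ℕ) (hs : ∀ p ∈ s, p.Prime) (c : ℤ) (w : ℕ → ℤ)
    (hw : ∀ p ∈ s, (w p : ZMod p) * ((∏ q ∈ s.erase p, q : ℕ) : ZMod p) = 1) :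
    expSumW N (∏ p ∈ s, p) c = ∏ p ∈ s, expSumW N p (c * w p) := by
  induction s using Finset.induction_on generalizing c w with
  | empty => simp [expSumW_one]
  | @insert p s hps ih =>
    have hp := hs p (mem_insert_self p s)
    have hs' : ∀ q ∈ s, q.Prime := fun q hq => hs q (mem_insert_of_mem hq)
    have : NeZero p := ⟨hp.ne_zero⟩
    have : NeZero (∏ q ∈ s, q) := ⟨prod_ne_zero_iff.2 fun q hq => (hs' q hq).ne_zero⟩
    have hcop : p.Coprime (∏ q ∈ s, q) := Nat.Coprime.prod_right fun q hq =>
      (Nat.coprime_primes hp (hs' q hq)).2 fun h => hps (h ▸ hq)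
    obtain ⟨u, v, huv⟩ := Nat.isCoprime_iff_coprime.2 hcop.symm
    have huv_mod (r : ℕ) : (u : ZMod r) * (∏ q ∈ s, q : ℕ) + v * p = 1 := by
      exact_mod_cast congrArg (Int.cast : ℤ → ZMod r) huv
    rw [prod_insert hps, prod_insert hps, expSumW_mul N hcop huv,
      ih hs' (v * c) (fun q => p * w q) fun q hq => ?_]
    · congr 1
      · -- `u` and `w p` are both inverses of `∏ s` modulo `p`.
        refine expSumW_congr ?_
        have hwp := hw p (mem_insert_self p s)
        rw [erase_insert hps] at hwp
        push_cast
        linear_combination (-c * u : ZMod p) * hwp + (c * w p : ZMod p) * huv_mod p -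
          (c * w p * v : ZMod p) * ZMod.natCast_self p
      · refine prod_congr rfl fun q hq => ?_
        have : NeZero q := ⟨(hs' q hq).ne_zero⟩
        refine expSumW_congr ?_
        have hm : ((∏ q ∈ s, q : ℕ) : ZMod q) = 0 :=
          (ZMod.natCast_eq_zero_iff _ _).2 (dvd_prod_of_mem _ hq)
        -- `v p ≡ 1` modulo every prime of `s`.
        push_cast
        linear_combination (c * w q : ZMod q) * huv_mod q - (c * w q * u : ZMod q) * hm
    · have hwq := hw q (mem_insert_of_mem hq)
      have hpq : p ≠ q := fun h => hps (h ▸ hq)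
      rw [erase_insert_of_ne hpq, prod_insert fun h => hps (mem_of_mem_erase h)] at hwq
      push_cast at hwq ⊢
      linear_combination hwq

lemma prod_primeFactors_erase_self {q p : ℕ} (hq : Squarefree q) (hp : p ∈ q.primeFactors) :
    ∏ r ∈ q.primeFactors.erase p, r = q / p :=
  (Nat.div_eq_of_eq_mul_left (Nat.prime_of_mem_primeFactors hp).pos
    (by rw [prod_erase_mul _ _ hp, Nat.prod_primeFactors_of_squarefree hq])).symm

lemma expSumW_eq_prod_primeFactors (N : ℕ) {q : ℕ} (hq : Squarefree q) (c : ℤ) (w : ℕ → ℤ)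
    (hw : ∀ p ∈ q.primeFactors, (w p : ZMod p) * ((q / p : ℕ) : ZMod p) = 1) :
    expSumW N q c = ∏ p ∈ q.primeFactors, expSumW N p (c * w p) := by
  conv_lhs => rw [← Nat.prod_primeFactors_of_squarefree hq]
  refine expSumW_prod_primes N _ (fun p hp => Nat.prime_of_mem_primeFactors hp) c w fun p hp => ?_
  rw [prod_primeFactors_erase_self hq hp]
  exact hw p hp

lemma expSumW_prime (N p : ℕ) [Fact p.Prime] (c : ℤ) :
    expSumW N p c = (if (c : ZMod p) = 0 then (p : ℂ) else 0) -
      ∑ x ∈ ({(N : ZMod p), -(N : ZMod p)} : Finset (ZMod p)),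
        ZMod.stdAddChar ((c : ZMod p) * x) := by
  have hW : univ.filter (fun x : ZMod p => IsUnit (((N : ZMod p) - x) * (N + x))) =
      univ \ {(N : ZMod p), -(N : ZMod p)} := by
    ext x
    simp [sub_eq_zero, add_eq_zero_iff_eq_neg', eq_comm]
  rw [expSumW_eq_sum_zmod, hW, sum_sdiff_eq_sub (subset_univ _)]
  simp_rw [mul_comm (c : ZMod p)]
  rw [AddChar.sum_mulShift _ (ZMod.isPrimitive_stdAddChar p), ZMod.card]
  push_cast
  rfl

lemma expSumW_prime_of_dvd {N p : ℕ} [Fact p.Prime] (hpN : p ∣ N) (c : ℤ) :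
    expSumW N p c = if (c : ZMod p) = 0 then (p : ℂ) - 1 else -1 := by
  rw [expSumW_prime, (ZMod.natCast_eq_zero_iff N p).2 hpN]
  split_ifs <;> simp

lemma expSumW_two_of_odd {N : ℕ} (hN : ¬ 2 ∣ N) (c : ℤ) : expSumW N 2 c = 1 := by
  have h01 : ∀ x : ZMod 2, x = 0 ∨ x = 1 := by decide
  have : Fact (Nat.Prime 2) := ⟨Nat.prime_two⟩
  have hN1 : (N : ZMod 2) = 1 := by
    rwa [ZMod.natCast_eq_one_iff_odd, Nat.odd_iff, ← Nat.two_dvd_ne_zero]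
  have hψ : ZMod.stdAddChar (1 : ZMod 2) = -1 := by
    rw [← Int.cast_one, ZMod.stdAddChar_coe]
    convert Complex.exp_pi_mul_I using 2
    push_cast
    ring
  rw [expSumW_prime, hN1, show (-1 : ZMod 2) = 1 from rfl, pair_eq_singleton, sum_singleton,
    mul_one]
  obtain hc | hc := h01 (c : ZMod 2)
  · simp only [hc, if_true, AddChar.map_zero_eq_one]
    norm_num
  · simp only [hc, one_ne_zero, if_false, hψ]
    norm_num

lemma expSumW_prime_of_not_dvd_two_mul {N p : ℕ} [Fact p.Prime] (hpN : ¬ p ∣ 2 * N) (c : ℤ) :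
    expSumW N p c =
      if (c : ZMod p) = 0 then (p : ℂ) - 2
      else ((-2 * Real.cos (2 * π * (c * N) / p) : ℝ) : ℂ) := by
  have hN : (N : ZMod p) ≠ -(N : ZMod p) := by
    rw [ne_eq, eq_neg_iff_add_eq_zero, ← two_mul]
    exact_mod_cast (ZMod.natCast_eq_zero_iff _ _).not.2 hpN
  rw [expSumW_prime, sum_pair hN]
  split_ifs with hc
  · simp only [hc, zero_mul, AddChar.map_zero_eq_one]
    ring
  · rw [mul_neg, ← Int.cast_natCast N, ← Int.cast_mul, ← Int.cast_neg, ZMod.stdAddChar_coe,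
      ZMod.stdAddChar_coe]
    push_cast
    rw [Complex.cos]
    ring_nf

lemma expSumW_prime_mul_of_isUnit {N p : ℕ} (hp : p.Prime) (k : ℕ) {w : ℤ}
    (hw : IsUnit (w : ZMod p)) :
    expSumW N p (k * w) =
      (((if p ∣ N then (if p ∣ k then (p : ℝ) - 1 else -1) else 1) *
        (if ¬ p ∣ 2 * N then
          (if p ∣ k then (p : ℝ) - 2 else -2 * Real.cos (2 * k * N * w * π / p))
        else 1) : ℝ) : ℂ) := by
  have : Fact p.Prime := ⟨hp⟩
  have hc : ((k * w : ℤ) : ZMod p) = 0 ↔ p ∣ k := by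
    push_cast
    rw [mul_eq_zero, or_iff_left hw.ne_zero, ZMod.natCast_eq_zero_iff]
  by_cases hpN : p ∣ N
  · rw [expSumW_prime_of_dvd hpN, if_pos hpN, if_neg (not_not.2 (dvd_mul_of_dvd_right hpN 2))]
    simp only [hc]
    split_ifs <;> push_cast <;> ring
  by_cases h2N : p ∣ 2 * N
  · obtain rfl : p = 2 := (Nat.prime_dvd_prime_iff_eq hp Nat.prime_two).1
      ((hp.dvd_mul.1 h2N).resolve_right hpN)
    rw [expSumW_two_of_odd hpN]
    simp [hpN, h2N]
  · rw [expSumW_prime_of_not_dvd_two_mul h2N, if_neg hpN, if_pos h2N]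
    simp only [hc]
    split_ifs
    · push_cast
      ring
    · push_cast
      ring_nf

lemma primeFactors_gcd_eq_filter {n : ℕ} (hn : n ≠ 0) (m : ℕ) :
    (m.gcd n).primeFactors = n.primeFactors.filter (· ∣ m) := by
  ext p
  simp only [Nat.mem_primeFactors, Nat.dvd_gcd_iff, mem_filter, ne_eq, Nat.gcd_eq_zero_iff, hn,
    and_false, not_false_eq_true, and_true]
  tauto

open ArithmeticFunction ArithmeticFunction.Moebius in
lemma prod_primeFactors_ite_dvd {R : Type*} [CommRing R] {n : ℕ} (hn : Squarefree n) (k : ℕ) :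
    ∏ p ∈ n.primeFactors, (if p ∣ k then (p : R) - 1 else -1) =
      μ n * ∏ p ∈ (k.gcd n).primeFactors, (1 - (p : R)) := by
  have hμ : (μ n : R) = (-1) ^ n.primeFactors.card := by
    rw [moebius_apply_of_squarefree hn, cardFactors_apply, ← Nat.toFinset_factors,
      List.toFinset_card_of_nodup ((Nat.squarefree_iff_nodup_primeFactorsList hn.ne_zero).1 hn)]
    push_cast
    rfl
  rw [hμ, primeFactors_gcd_eq_filter hn.ne_zero, prod_filter, ← prod_const, ← prod_mul_distrib]
  refine prod_congr rfl fun p _ => ?_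
  split_ifs <;> ring

open Real ArithmeticFunction ArithmeticFunction.Moebius in
theorem stmt_12_general (N P : ℕ) (hsq : Squarefree P)
    (inv : ℕ → ℕ)
    (hinv : ∀ p ∈ P.primeFactors, ¬ p ∣ 2 * N → (P / p) * inv p ≡ 1 [MOD p])
    (k : ℕ) :
    ∑ n ∈ (Finset.Icc 1 P).filter
        (fun n : ℕ => Int.gcd (((N : ℤ) - (n : ℤ)) * ((N : ℤ) + (n : ℤ))) (P : ℤ) = 1),
      Real.cos (2 * n * k * π / P)
    = (μ (Nat.gcd N P) : ℝ) *
      (∏ p ∈ (Nat.gcd k (Nat.gcd N P)).primeFactors, (1 - (p : ℝ))) *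
      ∏ p ∈ P.primeFactors.filter (fun p => ¬ p ∣ 2 * N),
        (if p ∣ k then (p : ℝ) - 2
         else -2 * Real.cos (2 * k * N * inv p * π / p)) := by
  have : NeZero P := ⟨hsq.ne_zero⟩
  -- At primes dividing `2N` the local factor does not see the choice of inverse.
  set w : ℕ → ℤ := fun p => if p ∣ 2 * N then (((P / p : ℕ) : ZMod p)⁻¹.val : ℤ) else inv p
  have hw : ∀ p ∈ P.primeFactors, (w p : ZMod p) * ((P / p : ℕ) : ZMod p) = 1 := by
    intro p hp
    have : Fact p.Prime := ⟨Nat.prime_of_mem_primeFactors hp⟩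
    by_cases h2N : p ∣ 2 * N
    · have hcop : (P / p).Coprime p := by
        simpa [Nat.gcd_eq_right (Nat.dvd_of_mem_primeFactors hp)] using
          Nat.coprime_div_gcd_of_squarefree hsq (Nat.prime_of_mem_primeFactors hp).ne_zero
      simp only [w, if_pos h2N, Int.cast_natCast, ZMod.natCast_zmod_val]
      rw [mul_comm]
      exact ZMod.coe_mul_inv_eq_one _ hcop
    · simp only [w, if_neg h2N, Int.cast_natCast]
      rw [mul_comm]
      exact_mod_cast (ZMod.natCast_eq_natCast_iff _ _ _).2 (hinv p hp h2N)
  have hre := re_expSumW N P k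
  simp only [Int.cast_natCast] at hre
  rw [← hre, expSumW_eq_prod_primeFactors N hsq k w hw,
    prod_congr rfl fun p hp => expSumW_prime_mul_of_isUnit (Nat.prime_of_mem_primeFactors hp) k
      (IsUnit.of_mul_eq_one _ (hw p hp)),
    ← Complex.ofReal_prod, Complex.ofReal_re, prod_mul_distrib, ← prod_filter, ← prod_filter,
    ← primeFactors_gcd_eq_filter hsq.ne_zero,
    prod_primeFactors_ite_dvd (hsq.squarefree_of_dvd (Nat.gcd_dvd_right N P))]
  congr 1
  refine prod_congr rfl fun p hp => ?_
  simp [w, (mem_filter.1 hp).2]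

open Real ArithmeticFunction ArithmeticFunction.Moebius in
theorem stmt_12 (N P : ℕ) (hN : 1 ≤ N) (hP : 1 ≤ P) (hsq : Squarefree P)
    (inv : ℕ → ℕ)
    (hinv : ∀ p ∈ P.primeFactors, ¬ p ∣ 2 * N → (P / p) * inv p ≡ 1 [MOD p])
    (k : ℕ) (hk : 1 ≤ k) :
    ∑ n ∈ (Finset.Icc 1 P).filter
        (fun n : ℕ => Int.gcd (((N : ℤ) - (n : ℤ)) * ((N : ℤ) + (n : ℤ))) (P : ℤ) = 1),
      Real.cos (2 * n * k * π / P)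
    = (μ (Nat.gcd N P) : ℝ) *
      (∏ p ∈ (Nat.gcd k (Nat.gcd N P)).primeFactors, (1 - (p : ℝ))) *
      ∏ p ∈ P.primeFactors.filter (fun p => ¬ p ∣ 2 * N),
        (if p ∣ k then (p : ℝ) - 2
         else -2 * Real.cos (2 * k * N * inv p * π / p)) :=
  stmt_12_general N P hsq inv hinv k
end

section
/- Let N ≥ 1, P ≥ 1 squarefree with gcd(N,P) = N_P, and P_{6N} = P/gcd(P,6N). For a divisor d of P_{6N}, let \bar d be an inverse of d modulo P/d, and define δ₆(n,m) = 1/2 if n ∣ 6 and gcd(n,m) = 1, and 0 otherwise. Then ∑_{d ∣ P_{6N}} δ₆(P/d, \bar d · N) = 1/2 if gcd(N,P) = 1 and = 0 if gcd(N,P) > 1. -/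
/-!
Put `G = gcd(P, 6N)` and `Q = P / G`. Since `P` is squarefree, `Q` is coprime to `6N`, so for
`d ∣ Q` the condition `P / d ∣ 6` forces `Q / d = 1`: only the term `d = Q` survives, and there
`P / d = G`. That term is nonzero exactly when `G ∣ 6` and `G` is coprime to `inv Q * N`; as `inv Q`
is a unit modulo `G`, this says that `G` is coprime to `N`, i.e. that `gcd(N, P) = 1`.
-/

namespace Nat

theorem eq_div_gcd_of_dvd_div_gcd_of_div_dvd {P M d : ℕ} (hP : Squarefree P) (hM : M ≠ 0)
    (hd : d ∣ P / P.gcd M) (hdM : P / d ∣ M) : d = P / P.gcd M := by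
  have hQdM : P / P.gcd M / d ∣ M :=
    (Nat.div_dvd_div hd (Nat.div_dvd_of_dvd (P.gcd_dvd_left M))).trans hdM
  have hQdQ : P / P.gcd M / d ∣ P / P.gcd M := Nat.div_dvd_of_dvd hd
  exact Nat.eq_of_dvd_of_div_eq_one hd
    (((coprime_div_gcd_of_squarefree hP hM).coprime_dvd_left hQdQ).eq_one_of_dvd hQdM)

theorem gcd_mul_dvd_and_gcd_mul_eq_one_iff {P N m k : ℕ} (hk : Coprime (P.gcd (m * N)) k) :
    P.gcd (m * N) ∣ m ∧ (P.gcd (m * N)).gcd (k * N) = 1 ↔ N.gcd P = 1 := by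
  constructor
  · rintro ⟨-, hkN⟩
    have hGN : Coprime (P.gcd (m * N)) N := Coprime.coprime_mul_left_right hkN
    have hdvd : N.gcd P ∣ P.gcd (m * N) :=
      Nat.dvd_gcd (N.gcd_dvd_right P) ((N.gcd_dvd_left P).mul_left m)
    exact (hGN.coprime_dvd_left hdvd).eq_one_of_dvd (N.gcd_dvd_left P)
  · intro hNP
    have hGN : Coprime (P.gcd (m * N)) N :=
      Coprime.coprime_dvd_left (P.gcd_dvd_left _) (Coprime.symm hNP)
    exact ⟨hGN.dvd_of_dvd_mul_right (P.gcd_dvd_right _), hk.mul_right hGN⟩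

end Nat

theorem stmt_15_general (N P : ℕ) (hN : 1 ≤ N) (hsq : Squarefree P)
    (inv : ℕ → ℕ)
    (hinv : ∀ d : ℕ, d ∣ P / Nat.gcd P (6 * N) → d * inv d ≡ 1 [MOD P / d]) :
    (∑ d ∈ (P / Nat.gcd P (6 * N)).divisors,
        (if (P / d) ∣ 6 ∧ Nat.gcd (P / d) (inv d * N) = 1 then (1 : ℝ) / 2 else 0))
      = if Nat.gcd N P = 1 then (1 : ℝ) / 2 else 0 := by
  set G := P.gcd (6 * N)
  have hGP : G ∣ P := P.gcd_dvd_left _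
  have hPQ : P / (P / G) = G := Nat.div_div_self hGP hsq.ne_zero
  have hQ : P / G ≠ 0 :=
    (Nat.div_ne_zero_iff_of_dvd hGP).2 ⟨hsq.ne_zero, Nat.gcd_ne_zero_left hsq.ne_zero⟩
  have hinvQ : Nat.Coprime G (inv (P / G)) := by
    have h := hinv (P / G) dvd_rfl
    rw [hPQ, mul_comm] at h
    exact (Nat.coprime_of_mul_modEq_one _ h).symm
  rw [Finset.sum_eq_single_of_mem (P / G) (Nat.mem_divisors_self _ hQ), hPQ]
  · exact if_congr (Nat.gcd_mul_dvd_and_gcd_mul_eq_one_iff hinvQ) rfl rfl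
  · intro d hd hne
    refine if_neg fun ⟨h6, _⟩ => hne ?_
    exact Nat.eq_div_gcd_of_dvd_div_gcd_of_div_dvd hsq (by omega) (Nat.dvd_of_mem_divisors hd)
      (h6.trans (dvd_mul_right 6 N))

theorem stmt_15 (N P : ℕ) (hN : 1 ≤ N) (hP : 1 ≤ P) (hsq : Squarefree P)
    (inv : ℕ → ℕ)
    (hinv : ∀ d : ℕ, d ∣ P / Nat.gcd P (6 * N) → d * inv d ≡ 1 [MOD P / d]) :
    (∑ d ∈ (P / Nat.gcd P (6 * N)).divisors,
        (if (P / d) ∣ 6 ∧ Nat.gcd (P / d) (inv d * N) = 1 then (1 : ℝ) / 2 else 0))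
      = if Nat.gcd N P = 1 then (1 : ℝ) / 2 else 0 :=
  stmt_15_general N P hN hsq inv hinv
end

section
/- Let N ≥ 1, P ≥ 1 squarefree, P_{6N} = P/gcd(P,6N), and for divisors d of P_{6N} define ω_P^d(N) = |W_P^d(N)|/P where W_P^d(N) = {n : 1 ≤ n ≤ P, gcd((N−n)(N+n),P)=1, gcd(P_{6N},n)=d}. For primes p, q with pq ∣ P_{6N}, p ≠ q one has ω_{P/q}^1(N) + ω_{P/p}^1(N) − ω_P^1(N) ≤ ω_{P/(pq)}^1(N). More generally, for p ∣ P_{6N} and d ∣ P_{6N}/p (d > 0), ω_{P/d}^1(N) + ω_{P/p}^1(N) − ω_P^1(N) ≤ ω_{P/(dp)}^1(N). -/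
open Finset

private def cnt (N M : ℕ) : ℕ :=
  ((Finset.range M).filter
    (fun n : ℕ => Int.gcd (((N : ℤ) - (n : ℤ)) * ((N : ℤ) + (n : ℤ))) (M : ℤ) = 1
      ∧ Nat.gcd (M / Nat.gcd M (6 * N)) n = 1)).card

private lemma iscop_congr {M : ℕ} {x y : ℤ} (h : (M:ℤ) ∣ x - y) :
    IsCoprime x (M:ℤ) ↔ IsCoprime y (M:ℤ) := by
  obtain ⟨t, ht⟩ := h
  constructor
  · intro hc
    have hy : y = x + (M:ℤ) * (-t) := by linarith
    rw [hy]; exact hc.add_mul_left_left _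
  · intro hc
    have hx : x = y + (M:ℤ) * t := by linarith
    rw [hx]; exact hc.add_mul_left_left _

private lemma Q_mod (N M n : ℕ) :
    (Int.gcd (((N : ℤ) - (n : ℤ)) * ((N : ℤ) + (n : ℤ))) (M : ℤ) = 1
      ∧ Nat.gcd (M / Nat.gcd M (6 * N)) n = 1)
    ↔ (Int.gcd (((N : ℤ) - ((n % M : ℕ) : ℤ)) * ((N : ℤ) + ((n % M : ℕ) : ℤ))) (M : ℤ) = 1
      ∧ Nat.gcd (M / Nat.gcd M (6 * N)) (n % M) = 1) := by
  have h0 : M * (n / M) + n % M = n := Nat.div_add_mod n M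
  have h0' : n - n % M = M * (n / M) := Nat.sub_eq_of_eq_add h0.symm
  have h1 : (M:ℤ) ∣ (n:ℤ) - ((n % M : ℕ) : ℤ) := by
    rw [← Int.ofNat_sub (Nat.mod_le n M), h0', Nat.cast_mul]
    exact dvd_mul_right _ _
  have hA : Int.gcd (((N : ℤ) - (n : ℤ)) * ((N : ℤ) + (n : ℤ))) (M : ℤ) = 1
      ↔ Int.gcd (((N : ℤ) - ((n % M : ℕ) : ℤ)) * ((N : ℤ) + ((n % M : ℕ) : ℤ))) (M : ℤ) = 1 := by
    rw [← Int.isCoprime_iff_gcd_eq_one, ← Int.isCoprime_iff_gcd_eq_one]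
    apply iscop_congr
    have e : ((N:ℤ) - n)*((N:ℤ)+n) - ((N:ℤ) - ((n % M : ℕ):ℤ))*((N:ℤ)+((n % M : ℕ):ℤ))
        = -(((n:ℤ) - ((n % M : ℕ):ℤ)) * ((n:ℤ) + ((n % M : ℕ):ℤ))) := by ring
    rw [e]
    exact dvd_neg.mpr (h1.mul_right _)
  have hB : Nat.gcd (M / Nat.gcd M (6 * N)) n = 1
      ↔ Nat.gcd (M / Nat.gcd M (6 * N)) (n % M) = 1 := by
    rw [Nat.gcd_rec (M / Nat.gcd M (6 * N)) n, Nat.gcd_rec (M / Nat.gcd M (6 * N)) (n % M),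
      Nat.mod_mod_of_dvd n (Nat.div_dvd_of_dvd (Nat.gcd_dvd_left M (6*N)))]
  exact and_congr hA hB

private lemma Q_split (N A B n : ℕ) (hAB : Nat.Coprime A B) :
    (Int.gcd (((N : ℤ) - (n : ℤ)) * ((N : ℤ) + (n : ℤ))) ((A*B : ℕ) : ℤ) = 1
      ∧ Nat.gcd ((A*B) / Nat.gcd (A*B) (6 * N)) n = 1)
    ↔ ((Int.gcd (((N : ℤ) - (n : ℤ)) * ((N : ℤ) + (n : ℤ))) (A : ℤ) = 1
      ∧ Nat.gcd (A / Nat.gcd A (6 * N)) n = 1)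
      ∧ (Int.gcd (((N : ℤ) - (n : ℤ)) * ((N : ℤ) + (n : ℤ))) (B : ℤ) = 1
      ∧ Nat.gcd (B / Nat.gcd B (6 * N)) n = 1)) := by
  set x : ℤ := ((N : ℤ) - (n : ℤ)) * ((N : ℤ) + (n : ℤ)) with hx
  have e : ∀ C : ℕ, Int.gcd x (C:ℤ) = Nat.gcd x.natAbs C := fun C => by
    simp [Int.gcd]
  have hA : Int.gcd x ((A*B : ℕ):ℤ) = 1 ↔ (Int.gcd x (A:ℤ) = 1 ∧ Int.gcd x (B:ℤ) = 1) := by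
    rw [e, e, e]
    exact Nat.coprime_mul_iff_right
  have hg : Nat.gcd (A*B) (6*N) = Nat.gcd A (6*N) * Nat.gcd B (6*N) := by
    rw [Nat.gcd_comm, Nat.Coprime.gcd_mul _ hAB, Nat.gcd_comm A, Nat.gcd_comm B]
  have e2 : (A*B) / Nat.gcd (A*B) (6*N)
      = (A / Nat.gcd A (6*N)) * (B / Nat.gcd B (6*N)) := by
    rw [hg]
    exact (Nat.div_mul_div_comm (Nat.gcd_dvd_left A (6*N)) (Nat.gcd_dvd_left B (6*N))).symm
  have hB : Nat.gcd ((A*B) / Nat.gcd (A*B) (6 * N)) n = 1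
      ↔ (Nat.gcd (A / Nat.gcd A (6 * N)) n = 1 ∧ Nat.gcd (B / Nat.gcd B (6 * N)) n = 1) := by
    rw [e2]
    exact Nat.coprime_mul_iff_left
  rw [hA, hB]
  tauto

private lemma lemA (N M : ℕ) (hM : 0 < M) :
    ((Finset.Icc 1 M).filter
      (fun n : ℕ => Int.gcd (((N : ℤ) - (n : ℤ)) * ((N : ℤ) + (n : ℤ))) (M : ℤ) = 1
        ∧ Nat.gcd (M / Nat.gcd M (6 * N)) n = 1)).card = cnt N M := by
  unfold cnt
  apply Finset.card_bij' (fun n _ => n % M) (fun k _ => if k = 0 then M else k)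
  · intro n hn
    simp only [mem_filter, mem_Icc] at hn
    simp only [mem_filter, mem_range]
    exact ⟨Nat.mod_lt n hM, (Q_mod N M n).mp hn.2⟩
  · intro k hk
    simp only [mem_filter, mem_range] at hk
    by_cases h : k = 0
    · subst h
      simp only [if_pos rfl, mem_filter, mem_Icc]
      refine ⟨⟨hM, le_refl M⟩, ?_⟩
      have := (Q_mod N M M).mpr
      rw [Nat.mod_self] at this
      exact this hk.2
    · simp only [if_neg h, mem_filter, mem_Icc]
      exact ⟨⟨Nat.one_le_iff_ne_zero.mpr h, le_of_lt hk.1⟩, hk.2⟩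
  · intro n hn
    simp only [mem_filter, mem_Icc] at hn
    rcases eq_or_lt_of_le hn.1.2 with h | h
    · rw [h, Nat.mod_self, if_pos rfl]
    · rw [Nat.mod_eq_of_lt h, if_neg (Nat.one_le_iff_ne_zero.mp hn.1.1)]
  · intro k hk
    simp only [mem_filter, mem_range] at hk
    by_cases h : k = 0
    · subst h; rw [if_pos rfl, Nat.mod_self]
    · rw [if_neg h, Nat.mod_eq_of_lt hk.1]

private lemma lemB (N A B : ℕ) (hAB : Nat.Coprime A B) (hA : 0 < A) (hB : 0 < B) :
    cnt N (A*B) = cnt N A * cnt N B := by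
  unfold cnt
  rw [← Finset.card_product]
  apply Finset.card_bij' (fun n _ => (n % A, n % B))
    (fun x _ => (Nat.chineseRemainder hAB x.1 x.2).val % (A*B))
  · intro n hn
    simp only [mem_filter, mem_range] at hn
    have h := (Q_split N A B n hAB).mp hn.2
    simp only [mem_product, mem_filter, mem_range]
    exact ⟨⟨Nat.mod_lt n hA, (Q_mod N A n).mp h.1⟩, ⟨Nat.mod_lt n hB, (Q_mod N B n).mp h.2⟩⟩
  · intro x hx
    simp only [mem_product, mem_filter, mem_range] at hx
    set k := (Nat.chineseRemainder hAB x.1 x.2).val % (A*B) with hkdef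
    have hAB0 : 0 < A * B := Nat.mul_pos hA hB
    have hkA : k % A = x.1 := by
      have h1 : k % A = (Nat.chineseRemainder hAB x.1 x.2).val % A :=
        Nat.mod_mod_of_dvd _ (dvd_mul_right A B)
      have h2 : (Nat.chineseRemainder hAB x.1 x.2).val % A = x.1 % A :=
        (Nat.chineseRemainder hAB x.1 x.2).2.1
      rw [h1, h2, Nat.mod_eq_of_lt hx.1.1]
    have hkB : k % B = x.2 := by
      have h1 : k % B = (Nat.chineseRemainder hAB x.1 x.2).val % B :=
        Nat.mod_mod_of_dvd _ (dvd_mul_left B A)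
      have h2 : (Nat.chineseRemainder hAB x.1 x.2).val % B = x.2 % B :=
        (Nat.chineseRemainder hAB x.1 x.2).2.2
      rw [h1, h2, Nat.mod_eq_of_lt hx.2.1]
    simp only [mem_filter, mem_range]
    constructor
    · exact Nat.mod_lt _ hAB0
    · refine (Q_split N A B k hAB).mpr ⟨?_, ?_⟩
      · have := (Q_mod N A k).mpr
        rw [hkA] at this
        exact this hx.1.2
      · have := (Q_mod N B k).mpr
        rw [hkB] at this
        exact this hx.2.2
  · intro n hn
    simp only [mem_filter, mem_range] at hn
    have hc := Nat.chineseRemainder hAB (n % A) (n % B)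
    have h1 : n ≡ (Nat.chineseRemainder hAB (n % A) (n % B)).val [MOD A] :=
      ((Nat.mod_modEq n A).symm.trans ((Nat.chineseRemainder hAB (n % A) (n % B)).2.1).symm)
    have h2 : n ≡ (Nat.chineseRemainder hAB (n % A) (n % B)).val [MOD B] :=
      ((Nat.mod_modEq n B).symm.trans ((Nat.chineseRemainder hAB (n % A) (n % B)).2.2).symm)
    have h3 : n ≡ (Nat.chineseRemainder hAB (n % A) (n % B)).val [MOD A * B] :=
      (Nat.modEq_and_modEq_iff_modEq_mul hAB).mp ⟨h1, h2⟩
    have := h3.symm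
    unfold Nat.ModEq at this
    rw [this, Nat.mod_eq_of_lt hn.1]
  · intro x hx
    simp only [mem_product, mem_filter, mem_range] at hx
    have hkA : ((Nat.chineseRemainder hAB x.1 x.2).val % (A*B)) % A = x.1 := by
      rw [Nat.mod_mod_of_dvd _ (dvd_mul_right A B)]
      have h2 : (Nat.chineseRemainder hAB x.1 x.2).val % A = x.1 % A :=
        (Nat.chineseRemainder hAB x.1 x.2).2.1
      rw [h2, Nat.mod_eq_of_lt hx.1.1]
    have hkB : ((Nat.chineseRemainder hAB x.1 x.2).val % (A*B)) % B = x.2 := by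
      rw [Nat.mod_mod_of_dvd _ (dvd_mul_left B A)]
      have h2 : (Nat.chineseRemainder hAB x.1 x.2).val % B = x.2 % B :=
        (Nat.chineseRemainder hAB x.1 x.2).2.2
      rw [h2, Nat.mod_eq_of_lt hx.2.1]
    exact Prod.ext hkA hkB

private lemma cnt_le (N M : ℕ) : cnt N M ≤ M := by
  unfold cnt
  calc _ ≤ (Finset.range M).card := Finset.card_filter_le _ _
    _ = M := Finset.card_range M

private lemma key (N P : ℕ) (hN : 1 ≤ N) (hP : 1 ≤ P) (hsq : Squarefree P)
    (ω : ℕ → ℝ)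
    (hω : ∀ M : ℕ, ω M =
      (((Finset.Icc 1 M).filter
        (fun n : ℕ => Int.gcd (((N : ℤ) - (n : ℤ)) * ((N : ℤ) + (n : ℤ))) (M : ℤ) = 1
          ∧ Nat.gcd (M / Nat.gcd M (6 * N)) n = 1)).card : ℝ) / M)
    (p d : ℕ) (hp : p.Prime) (hpd : p ∣ P / Nat.gcd P (6 * N))
    (hd : 0 < d) (hdvd : d ∣ (P / Nat.gcd P (6 * N)) / p) :
    ω (P / d) + ω (P / p) - ω P ≤ ω (P / (d * p)) := by
  have hP0 : 0 < P := hP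
  have hp0 : 0 < p := hp.pos
  set P' := P / Nat.gcd P (6 * N) with hP'
  have hP'dvd : P' ∣ P := Nat.div_dvd_of_dvd (Nat.gcd_dvd_left _ _)
  have hPp : p * (P' / p) = P' := Nat.mul_div_cancel' hpd
  have hdp : d * p ∣ P' := by
    obtain ⟨t, ht⟩ := hdvd
    exact ⟨t, by rw [← hPp, ht]; ring⟩
  have hdpP : d * p ∣ P := hdp.trans hP'dvd
  set M₀ := P / (d * p) with hM₀
  have hPeq : M₀ * (d * p) = P := Nat.div_mul_cancel hdpP
  have hM₀0 : 0 < M₀ := Nat.div_pos (Nat.le_of_dvd hP0 hdpP) (Nat.mul_pos hd hp0)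
  have hsq' : Squarefree P' := hsq.squarefree_of_dvd hP'dvd
  have hpnd : ¬ p ∣ d := by
    intro h
    obtain ⟨u, hu⟩ := h
    obtain ⟨t, ht⟩ := hdp
    exact hp.not_isUnit (hsq' p ⟨u * t, by rw [ht, hu]; ring⟩)
  have hcdp : Nat.Coprime d p := ((hp.coprime_iff_not_dvd).mpr hpnd).symm
  have hcop : Nat.Coprime M₀ (d * p) := by
    have h1 : Nat.gcd M₀ (d * p) * Nat.gcd M₀ (d * p) ∣ P :=
      calc Nat.gcd M₀ (d * p) * Nat.gcd M₀ (d * p)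
          ∣ Nat.gcd M₀ (d * p) * (d * p) := mul_dvd_mul_left _ (Nat.gcd_dvd_right _ _)
        _ ∣ M₀ * (d * p) := mul_dvd_mul_right (Nat.gcd_dvd_left _ _) _
        _ = P := hPeq
    exact Nat.isUnit_iff.mp (hsq _ h1)
  have hcopd : Nat.Coprime M₀ d := hcop.coprime_dvd_right (dvd_mul_right d p)
  have hcopp : Nat.Coprime M₀ p := hcop.coprime_dvd_right (dvd_mul_left p d)
  have hPd : P / d = M₀ * p := by
    rw [show P = M₀ * p * d by rw [← hPeq]; ring]
    exact Nat.mul_div_cancel (M₀ * p) hd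
  have hPpe : P / p = M₀ * d := by
    rw [show P = M₀ * d * p by rw [← hPeq]; ring]
    exact Nat.mul_div_cancel (M₀ * d) hp0
  have c1 : cnt N P = cnt N M₀ * (cnt N d * cnt N p) := by
    rw [← hPeq, lemB N M₀ (d*p) hcop hM₀0 (Nat.mul_pos hd hp0), lemB N d p hcdp hd hp0]
  have c2 : cnt N (P / d) = cnt N M₀ * cnt N p := by
    rw [hPd, lemB N M₀ p hcopp hM₀0 hp0]
  have c3 : cnt N (P / p) = cnt N M₀ * cnt N d := by
    rw [hPpe, lemB N M₀ d hcopd hM₀0 hd]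
  have m0 : (M₀:ℝ) ≠ 0 := Nat.cast_ne_zero.mpr hM₀0.ne'
  have d0 : (d:ℝ) ≠ 0 := Nat.cast_ne_zero.mpr hd.ne'
  have p0 : (p:ℝ) ≠ 0 := Nat.cast_ne_zero.mpr hp0.ne'
  set K : ℝ := (cnt N M₀ : ℝ) / M₀ with hK
  set α : ℝ := (cnt N d : ℝ) / d with hα
  set β : ℝ := (cnt N p : ℝ) / p with hβ
  have w0 : ω (P / (d * p)) = K := by
    rw [hω _, ← hM₀]
    rw [lemA N M₀ hM₀0]
  have wP : ω P = K * (α * β) := by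
    rw [hω P, lemA N P hP0, c1, ← hPeq, hK, hα, hβ]
    push_cast
    field_simp
  have wPd : ω (P / d) = K * β := by
    rw [hω _, lemA N (P/d) (by rw [hPd]; exact Nat.mul_pos hM₀0 hp0), c2, hPd, hK, hβ]
    push_cast
    field_simp
  have wPp : ω (P / p) = K * α := by
    rw [hω _, lemA N (P/p) (by rw [hPpe]; exact Nat.mul_pos hM₀0 hd), c3, hPpe, hK, hα]
    push_cast
    field_simp
  rw [wPd, wPp, wP, w0]
  have hK0 : 0 ≤ K := div_nonneg (Nat.cast_nonneg _) (Nat.cast_nonneg _)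
  have hdR : (0:ℝ) < d := by exact_mod_cast hd
  have hpR : (0:ℝ) < p := by exact_mod_cast hp0
  have hα1 : α ≤ 1 := by
    rw [hα, div_le_one hdR]
    exact_mod_cast cnt_le N d
  have hβ1 : β ≤ 1 := by
    rw [hβ, div_le_one hpR]
    exact_mod_cast cnt_le N p
  nlinarith [mul_nonneg (mul_nonneg hK0 (sub_nonneg.mpr hα1)) (sub_nonneg.mpr hβ1)]

theorem stmt_16 (N P : ℕ) (hN : 1 ≤ N) (hP : 1 ≤ P) (hsq : Squarefree P)
    (ω : ℕ → ℝ)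
    (hω : ∀ M : ℕ, ω M =
      (((Finset.Icc 1 M).filter
        (fun n : ℕ => Int.gcd (((N : ℤ) - (n : ℤ)) * ((N : ℤ) + (n : ℤ))) (M : ℤ) = 1
          ∧ Nat.gcd (M / Nat.gcd M (6 * N)) n = 1)).card : ℝ) / M) :
    (∀ p q : ℕ, p.Prime → q.Prime → p ≠ q → p * q ∣ P / Nat.gcd P (6 * N) →
        ω (P / q) + ω (P / p) - ω P ≤ ω (P / (p * q)))
    ∧ (∀ p d : ℕ, p.Prime → p ∣ P / Nat.gcd P (6 * N) → 0 < d →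
        d ∣ (P / Nat.gcd P (6 * N)) / p →
        ω (P / d) + ω (P / p) - ω P ≤ ω (P / (d * p))) := by
  constructor
  · intro p q hp hq hne hpq
    have hpP' : p ∣ P / Nat.gcd P (6 * N) := (dvd_mul_right p q).trans hpq
    have hq' : q ∣ (P / Nat.gcd P (6 * N)) / p := by
      obtain ⟨t, ht⟩ := hpq
      have : (P / Nat.gcd P (6 * N)) / p = q * t := by
        rw [ht, mul_assoc, Nat.mul_div_cancel_left _ hp.pos]
      exact this ▸ dvd_mul_right q t
    have := key N P hN hP hsq ω hω p q hp hpP' hq.pos hq'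
    rw [mul_comm p q]
    exact this
  · intro p d hp hpd hd hdvd
    exact key N P hN hP hsq ω hω p d hp hpd hd hdvd
end
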